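/- Let X_in be a finite multiset of nonzero vectors spanning a d-dimensional subspace L of R^D, with d ≥ 1. Then for any fixed orthonormal basis u_1,...,u_d of L, inf_{λ ∈ R^d, ‖λ‖=1} Σ_{x ∈ X_in} (Σ_{i=1}^d λ_i² ⟨u_i,x⟩²)^{1/2} = min_{i=1,...,d} Σ_{x ∈ X_in} |⟨u_i, x⟩|. -/
import Mathlib


/-- The Euclidean norm of a vector in `ℝ^n`. -/
noncomputable def euclNorm {n : ℕ} (x : Fin n → ℝ) : ℝ :=
  Real.sqrt (∑ i, x i ^ 2)

/-- Jensen-type inequality: `Σ p_i √c_i ≤ √(Σ p_i c_i)` when the `p_i` are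
nonnegative and sum to one and the `c_i` are nonnegative. -/
lemma sum_sqrt_le_sqrt_sum {d : ℕ} (p c : Fin d → ℝ) (hp : ∀ i, 0 ≤ p i)
    (hc : ∀ i, 0 ≤ c i) (hs : ∑ i, p i = 1) :
    ∑ i, p i * Real.sqrt (c i) ≤ Real.sqrt (∑ i, p i * c i) := by
  have h := Real.sum_mul_le_sqrt_mul_sqrt Finset.univ
    (fun i => Real.sqrt (p i)) (fun i => Real.sqrt (p i * c i))
  have h1 : ∀ i : Fin d, Real.sqrt (p i) * Real.sqrt (p i * c i)
      = p i * Real.sqrt (c i) := by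
    intro i
    rw [Real.sqrt_mul (hp i), ← mul_assoc, Real.mul_self_sqrt (hp i)]
  have h2 : ∀ i : Fin d, Real.sqrt (p i) ^ 2 = p i := fun i => Real.sq_sqrt (hp i)
  have h3 : ∀ i : Fin d, Real.sqrt (p i * c i) ^ 2 = p i * c i :=
    fun i => Real.sq_sqrt (mul_nonneg (hp i) (hc i))
  simp only [h1, h2, h3, hs, Real.sqrt_one, one_mul] at h
  exact h

lemma multiset_sum_map_sum {α : Type*} {d : ℕ} (s : Multiset α) (f : Fin d → α → ℝ) :
    (s.map fun x => ∑ i, f i x).sum = ∑ i, (s.map (f i)).sum := by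
  induction s using Multiset.induction with
  | empty => simp
  | cons a s ih =>
      simp [ih, Finset.sum_add_distrib]

/-- Let `Xin` be a finite multiset of nonzero vectors spanning a
`d`-dimensional subspace `L ⊆ ℝ^D`, `d ≥ 1`, and let `u_1, …, u_d` be a fixed
orthonormal basis of `L`.  Then
`inf_{‖λ‖ = 1} Σ_{x ∈ Xin} (Σ_i λ_i² ⟨u_i, x⟩²)^{1/2}
  = min_i Σ_{x ∈ Xin} |⟨u_i, x⟩|`. -/
theorem inf_over_sphere_eq_min_over_basis
    (D d : ℕ) (hd : 1 ≤ d) (L : Submodule ℝ (Fin D → ℝ))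
    (u : Fin d → (Fin D → ℝ))
    (hortho : ∀ i j, (∑ k, u i k * u j k) = if i = j then (1 : ℝ) else 0)
    (hbasis : Submodule.span ℝ (Set.range u) = L)
    (Xin : Multiset (Fin D → ℝ))
    (hXmem : ∀ x ∈ Xin, x ∈ L) (hXne : ∀ x ∈ Xin, x ≠ 0)
    (hXspan : Submodule.span ℝ {x | x ∈ Xin} = L)
    (hne : (Finset.univ : Finset (Fin d)).Nonempty) :
    sInf {r : ℝ | ∃ lam : Fin d → ℝ, euclNorm lam = 1 ∧
          r = (Xin.map fun x =>
                Real.sqrt (∑ i, lam i ^ 2 * (∑ k, u i k * x k) ^ 2)).sum}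
      =
    Finset.univ.inf' hne fun i => (Xin.map fun x => |∑ k, u i k * x k|).sum := by
  set S := {r : ℝ | ∃ lam : Fin d → ℝ, euclNorm lam = 1 ∧
          r = (Xin.map fun x =>
                Real.sqrt (∑ i, lam i ^ 2 * (∑ k, u i k * x k) ^ 2)).sum}
  set m := Finset.univ.inf' hne fun i => (Xin.map fun x => |∑ k, u i k * x k|).sum
  -- For each i, the value ∑ |⟨u i, x⟩| is attained by lam = e_i.
  have hmem : ∀ i : Fin d, ((Xin.map fun x => |∑ k, u i k * x k|).sum) ∈ S := by
    intro i
    refine ⟨fun j => if j = i then 1 else 0, ?_, ?_⟩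
    · unfold euclNorm
      rw [show (∑ j : Fin d, (if j = i then (1:ℝ) else 0) ^ 2) = 1 by
        simp [ite_pow], Real.sqrt_one]
    · congr 1
      apply Multiset.map_congr rfl
      intro x _
      rw [show (∑ j : Fin d, (if j = i then (1:ℝ) else 0) ^ 2 * (∑ k, u j k * x k) ^ 2)
          = (∑ k, u i k * x k) ^ 2 by simp [ite_pow, Finset.sum_ite_eq]]
      exact (Real.sqrt_sq_eq_abs _).symm
  -- Every element of S is ≥ m.
  have hlb : ∀ r ∈ S, m ≤ r := by
    rintro r ⟨lam, hlam, rfl⟩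
    have hsum1 : ∑ i, lam i ^ 2 = 1 := by
      have := congrArg (fun t => t ^ 2) hlam
      simpa [euclNorm, Real.sq_sqrt (Finset.sum_nonneg fun i _ => sq_nonneg (lam i))]
        using this
    -- pointwise bound for each x
    have hpt : ∀ x : Fin D → ℝ,
        ∑ i, lam i ^ 2 * |∑ k, u i k * x k|
          ≤ Real.sqrt (∑ i, lam i ^ 2 * (∑ k, u i k * x k) ^ 2) := by
      intro x
      have := sum_sqrt_le_sqrt_sum (fun i => lam i ^ 2)
        (fun i => (∑ k, u i k * x k) ^ 2)
        (fun i => sq_nonneg _) (fun i => sq_nonneg _) hsum1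
      simpa [Real.sqrt_sq_eq_abs] using this
    have h1 : (Xin.map fun x => ∑ i, lam i ^ 2 * |∑ k, u i k * x k|).sum
        ≤ (Xin.map fun x =>
            Real.sqrt (∑ i, lam i ^ 2 * (∑ k, u i k * x k) ^ 2)).sum := by
      apply Multiset.sum_map_le_sum_map
      intro x _
      exact hpt x
    refine le_trans ?_ h1
    rw [multiset_sum_map_sum Xin (fun i x => lam i ^ 2 * |∑ k, u i k * x k|)]
    have h2 : ∀ i : Fin d,
        (Xin.map fun x => lam i ^ 2 * |∑ k, u i k * x k|).sum
          = lam i ^ 2 * (Xin.map fun x => |∑ k, u i k * x k|).sum := by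
      intro i
      rw [← Multiset.sum_map_mul_left]
    calc m = (∑ i, lam i ^ 2) * m := by rw [hsum1, one_mul]
      _ = ∑ i, lam i ^ 2 * m := by rw [Finset.sum_mul]
      _ ≤ ∑ i, lam i ^ 2 * (Xin.map fun x => |∑ k, u i k * x k|).sum := by
          apply Finset.sum_le_sum
          intro i _
          exact mul_le_mul_of_nonneg_left (Finset.inf'_le _ (Finset.mem_univ i))
            (sq_nonneg _)
      _ = ∑ i, (Xin.map fun x => lam i ^ 2 * |∑ k, u i k * x k|).sum := by
          simp_rw [h2]
  apply le_antisymm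
  · obtain ⟨i, _, hi⟩ := Finset.exists_mem_eq_inf' hne
      (fun i => (Xin.map fun x => |∑ k, u i k * x k|).sum)
    rw [show m = (Xin.map fun x => |∑ k, u i k * x k|).sum from hi]
    exact csInf_le ⟨m, hlb⟩ (hmem i)
  · exact le_csInf ⟨_, hmem ⟨0, hd⟩⟩ hlb
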